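/- An n-fold Pfister form ⟨⟨a_1, …, a_n⟩⟩ over a field k of characteristic not 2 is either anisotropic or hyperbolic. -/

import Mathlib

open QuadraticMap

/-- The `n`-fold Pfister form `⟨⟨a₁, …, aₙ⟩⟩ = ⟨1, −a₁⟩ ⊗ … ⊗ ⟨1, −aₙ⟩`, realized as
the diagonal form of dimension `2^n` whose entries are the products `∏_{i ∈ S} (−aᵢ)`
over subsets `S ⊆ {1, …, n}`. -/
noncomputable def pfisterForm (k : Type*) [Field k] {n : ℕ} (a : Fin n → k) :
    QuadraticForm k (Finset (Fin n) → k) :=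
  QuadraticMap.weightedSumSquares k (fun S : Finset (Fin n) => ∏ i ∈ S, (-(a i)))

/-- The split form `r·ℍ`, an orthogonal sum of `r` hyperbolic planes
(in characteristic `≠ 2`, `ℍ ≅ ⟨1, −1⟩`). -/
noncomputable def hyperbolicSum (k : Type*) [Field k] (r : ℕ) :
    QuadraticForm k ((Fin r ⊕ Fin r) → k) :=
  QuadraticMap.weightedSumSquares k
    (Sum.elim (fun _ : Fin r => (1 : k)) (fun _ : Fin r => (-1 : k)))

/-- A quadratic form is hyperbolic if it is isometric to an orthogonal sum of
hyperbolic planes. -/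
def IsHyperbolic {k V : Type*} [Field k] [AddCommGroup V] [Module k V]
    (q : QuadraticForm k V) : Prop :=
  ∃ r : ℕ, q.Equivalent (hyperbolicSum k r)

/-!
A Pfister form `φ = ψ ⊥ -b ψ` is round: every nonzero value `c` of `φ` is a similarity factor,
`c φ ≅ φ`. By induction on the number of slots, write `c = e - b d` with `e`, `d` values of
`ψ`. When both are nonzero, `c = e (1 + γ)` with `γ = -b d / e`, and both factors are
similarity factors of `φ`: the first because it is one of `ψ`, the second because `1 + γ` is
represented by `⟨1, γ⟩` and `φ ≅ ⟨1, γ⟩ ⊗ ψ`.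

The dichotomy follows by the same induction. If `ψ` is hyperbolic, so is `ψ ⊥ -b ψ`. If `ψ` is
anisotropic but `φ` is isotropic, then `ψ(x) = b ψ(y)` with both sides nonzero, so by roundness
`b` is a similarity factor of `ψ` and `φ ≅ ψ ⊥ -ψ`, which is hyperbolic.
-/

namespace QuadraticMap

section CommRing

variable {R M M' N : Type*} [CommRing R] [AddCommGroup M] [Module R M]
  [AddCommGroup M'] [Module R M'] [AddCommGroup N] [Module R N]
  {Q : QuadraticMap R M N} {Q' : QuadraticMap R M' N}

theorem Anisotropic.of_equivalent (hQ' : Q'.Anisotropic) (h : Q.Equivalent Q') :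
    Q.Anisotropic := by
  obtain ⟨e⟩ := h
  intro v hv
  exact e.toLinearEquiv.map_eq_zero_iff.mp (hQ' (e v) (by rw [e.map_app, hv]))

theorem Equivalent.smul (h : Q.Equivalent Q') (t : R) : (t • Q).Equivalent (t • Q') := by
  obtain ⟨e⟩ := h
  exact ⟨{ e.toLinearEquiv with map_app' := fun v => by simp [e.map_app] }⟩

theorem Equivalent.neg (h : Q.Equivalent Q') : (-Q).Equivalent (-Q') := by
  obtain ⟨e⟩ := h
  exact ⟨{ e.toLinearEquiv with map_app' := fun v => by simp [e.map_app] }⟩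

theorem smul_prod (t : R) (Q : QuadraticMap R M N) (Q' : QuadraticMap R M' N) :
    t • Q.prod Q' = (t • Q).prod (t • Q') := by
  ext v; simp [smul_add]

theorem neg_prod (Q : QuadraticMap R M N) (Q' : QuadraticMap R M' N) :
    -Q.prod Q' = (-Q).prod (-Q') := by
  ext v; simp [add_comm]

theorem Equivalent.smul_mul {s t : R} (hs : Q.Equivalent (s • Q)) (ht : Q.Equivalent (t • Q)) :
    Q.Equivalent ((s * t) • Q) := by
  simpa [smul_smul] using hs.trans (ht.smul s)

theorem prod_neg_prod_prod_neg_equivalent (Q : QuadraticMap R M N) (Q' : QuadraticMap R M' N) :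
    ((Q.prod (-Q)).prod (Q'.prod (-Q'))).Equivalent ((Q.prod Q').prod (-Q.prod Q')) := by
  rw [neg_prod]
  exact ⟨IsometryEquiv.prodProdProdComm _ _ _ _⟩

theorem map_smul_add_smul (Q : QuadraticForm R M) (α β : R) (u v : M) :
    Q (α • u + β • v) = α * α * Q u + β * β * Q v + α * β * polar Q u v := by
  rw [QuadraticMap.map_add Q, Q.map_smul, Q.map_smul, polar_smul_left, polar_smul_right]
  simp only [smul_eq_mul]
  ring

variable {ι ι' : Type*} [Fintype ι] [Fintype ι']

theorem weightedSumSquares_comp_equivalent (e : ι ≃ ι') (w : ι' → R) :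
    (weightedSumSquares R (w ∘ e)).Equivalent (weightedSumSquares R w) :=
  ⟨{ LinearEquiv.funCongrLeft R R e.symm with
    map_app' := fun v => by
      simp only [weightedSumSquares_apply]
      exact Fintype.sum_equiv e.symm _ _ fun i => by simp [LinearEquiv.funCongrLeft_apply] }⟩

theorem weightedSumSquares_sumElim_equivalent (u : ι → R) (v : ι' → R) :
    (weightedSumSquares R (Sum.elim u v)).Equivalent
      ((weightedSumSquares R u).prod (weightedSumSquares R v)) :=
  ⟨{ LinearEquiv.sumArrowLequivProdArrow ι ι' R R with
    map_app' := fun f => by simp [weightedSumSquares_apply, Fintype.sum_sum_type] }⟩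

theorem weightedSumSquares_smul (c : R) (w : ι → R) :
    weightedSumSquares R (c • w) = c • weightedSumSquares R w := by
  ext v
  simp [weightedSumSquares_apply, Finset.mul_sum, mul_assoc]

end CommRing

section Field

variable {k V V' : Type*} [Field k] [AddCommGroup V] [Module k V] [AddCommGroup V'] [Module k V']

theorem prod_smul_equivalent_of_add_mul_sq {b c d x y : k} (hd : d ≠ 0)
    (h : b * x ^ 2 + c * y ^ 2 = d) (Q : QuadraticForm k V) :
    ((b • Q).prod (c • Q)).Equivalent ((d • Q).prod ((b * c * d) • Q)) := by
  let e : (V × V) ≃ₗ[k] V × V := LinearEquiv.ofLinearMap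
    ((x • LinearMap.fst k V V + (-(c * y)) • LinearMap.snd k V V).prod
      (y • LinearMap.fst k V V + (b * x) • LinearMap.snd k V V))
    (((b * x / d) • LinearMap.fst k V V + (c * y / d) • LinearMap.snd k V V).prod
      ((-y / d) • LinearMap.fst k V V + (x / d) • LinearMap.snd k V V))
    (by ext u <;> simp <;> match_scalars <;> field_simp <;> first | ring1 | linear_combination h)
    (by ext u <;> simp <;> match_scalars <;> field_simp <;> first | ring1 | linear_combination h)
  refine ⟨IsometryEquiv.symm { e with map_app' := fun v => ?_ }⟩
  change b * Q (x • v.1 + (-(c * y)) • v.2) + c * Q (y • v.1 + (b * x) • v.2)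
    = d * Q v.1 + b * c * d * Q v.2
  rw [map_smul_add_smul, map_smul_add_smul]
  linear_combination (Q v.1 + b * c * Q v.2) * h

theorem equivalent_mul_self_smul (Q : QuadraticForm k V) {u : k} (hu : u ≠ 0) :
    Q.Equivalent ((u * u) • Q) :=
  ⟨{ LinearEquiv.smulOfNeZero k V u⁻¹ (inv_ne_zero hu) with
    map_app' := fun v => by simp [Q.map_smul, ← mul_assoc, mul_inv_cancel₀ hu] }⟩

theorem prod_smul_equivalent_smul {c d x y : k} (hd : d ≠ 0) (h : x ^ 2 + c * y ^ 2 = d)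
    (Q : QuadraticForm k V) : (Q.prod (c • Q)).Equivalent (d • Q.prod (c • Q)) := by
  have := prod_smul_equivalent_of_add_mul_sq (b := 1) (c := c) (x := x) (y := y) hd
    (by linear_combination h) Q
  rw [one_smul, one_mul] at this
  rwa [smul_prod, smul_smul, mul_comm d c]

theorem smul_prod_neg_smul_equivalent (h2 : (2 : k) ≠ 0) {c : k} (hc : c ≠ 0)
    (Q : QuadraticForm k V) :
    ((c • Q).prod (-(c • Q))).Equivalent (Q.prod (-Q)) := by
  have h : c * ((c + 1) / (2 * c)) ^ 2 + -c * ((c - 1) / (2 * c)) ^ 2 = 1 := by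
    field_simp
    ring
  have := prod_smul_equivalent_of_add_mul_sq one_ne_zero h Q
  rw [one_smul, show (-c) • Q = -(c • Q) from neg_smul c Q] at this
  refine this.trans (Equivalent.prod (.refl Q) ?_)
  rw [show (c * -c * 1) • Q = (c * c) • -Q by
    rw [smul_neg, ← neg_smul (c * c) Q]; ring_nf]
  exact (equivalent_mul_self_smul (-Q) hc).symm

variable {Q : QuadraticForm k V}

theorem Equivalent.exists_mul_apply_eq {t : k} (h : Q.Equivalent (t • Q)) (v : V) :
    ∃ w, t * Q w = Q v := by
  obtain ⟨e⟩ := h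
  exact ⟨e v, e.map_app v⟩

theorem Equivalent.prod_smul {t : k} (h : Q.Equivalent (t • Q)) (c : k) :
    (Q.prod (c • Q)).Equivalent (t • Q.prod (c • Q)) := by
  rw [smul_prod, smul_comm t c]
  exact h.prod (h.smul c)

def IsRound (Q : QuadraticForm k V) : Prop :=
  ∀ v, Q v ≠ 0 → Q.Equivalent (Q v • Q)

theorem IsRound.of_equivalent {Q' : QuadraticForm k V'} (hQ' : IsRound Q')
    (h : Q.Equivalent Q') : IsRound Q := by
  intro v hv
  have ⟨e⟩ := h
  have hv' : Q' (e v) = Q v := e.map_app v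
  have hQ'v := hQ' (e v) (hv' ▸ hv)
  rw [hv'] at hQ'v
  exact h.trans (hQ'v.trans (h.symm.smul _))

theorem isRound_of_isSquare (h : ∀ v, IsSquare (Q v)) : IsRound Q := by
  intro v hv
  obtain ⟨u, hu⟩ := h v
  rw [hu] at hv ⊢
  exact equivalent_mul_self_smul Q (left_ne_zero_of_mul hv)

theorem IsRound.prod_smul (hQ : IsRound Q) {c : k} (hc : c ≠ 0) : IsRound (Q.prod (c • Q)) := by
  rintro ⟨x, y⟩ hv
  simp only [prod_apply, smul_apply, smul_eq_mul] at hv ⊢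
  by_cases hy : Q y = 0
  · rw [hy, mul_zero, add_zero] at hv ⊢
    exact (hQ x hv).prod_smul c
  by_cases hx : Q x = 0
  · rw [hx, zero_add, mul_comm]
    exact ((hQ y hy).prod_smul c).smul_mul
      (prod_smul_equivalent_smul hc (x := 0) (y := 1) (by ring) Q)
  obtain ⟨w, hw⟩ := (hQ x hx).exists_mul_apply_eq y
  have hw0 : Q w ≠ 0 := right_ne_zero_of_mul (hw.symm ▸ hy)
  have hval : Q x + c * Q y = Q x * (1 + c * Q w) := by rw [← hw]; ring
  have h1 : 1 + c * Q w ≠ 0 := right_ne_zero_of_mul (hval ▸ hv)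
  have hsim : (Q.prod (c • Q)).Equivalent (Q.prod ((c * Q w) • Q)) :=
    .prod (.refl Q) (by rw [← smul_smul]; exact (hQ w hw0).smul c)
  rw [hval]
  exact ((hQ x hx).prod_smul c).smul_mul <| hsim.trans <|
    (prod_smul_equivalent_smul h1 (x := 1) (y := 1) (by ring) Q).trans (hsim.symm.smul _)

theorem IsRound.anisotropic_prod_smul_or_equivalent (hQ : IsRound Q) (hQa : Q.Anisotropic)
    {c : k} (hc : c ≠ 0) : (Q.prod (c • Q)).Anisotropic ∨ (c • Q).Equivalent (-Q) := by
  refine or_iff_not_imp_left.2 fun hiso => ?_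
  obtain ⟨⟨x, y⟩, hv0, hv⟩ := (not_anisotropic_iff_exists _).1 hiso
  simp only [prod_apply, smul_apply, smul_eq_mul] at hv
  have hy : Q y ≠ 0 := fun hy => hv0 <| by
    rw [hQa x (by rw [← hv, hy, mul_zero, add_zero]), hQa y hy, Prod.mk_zero_zero]
  obtain ⟨w, hw⟩ := (hQ y hy).exists_mul_apply_eq x
  have hQw : Q w = -c := mul_left_cancel₀ hy (by linear_combination hw + hv)
  have := (hQ w (hQw ▸ neg_ne_zero.2 hc)).neg
  rw [hQw, neg_smul c Q, neg_neg] at this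
  exact this.symm

end Field

end QuadraticMap

section Hyperbolic

variable {k V V' : Type*} [Field k] [AddCommGroup V] [Module k V] [AddCommGroup V'] [Module k V']
  {Q : QuadraticForm k V} {Q' : QuadraticForm k V'}

theorem hyperbolicSum_equivalent (r : ℕ) :
    (hyperbolicSum k r).Equivalent
      ((weightedSumSquares k (1 : Fin r → k)).prod (-weightedSumSquares k (1 : Fin r → k))) := by
  have h : (fun _ : Fin r => (-1 : k)) = (-1 : k) • (1 : Fin r → k) := by ext; simp
  rw [hyperbolicSum, h, ← neg_one_smul k (weightedSumSquares k (1 : Fin r → k)),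
    ← weightedSumSquares_smul]
  exact weightedSumSquares_sumElim_equivalent _ _

theorem IsHyperbolic.of_equivalent (h : IsHyperbolic Q') (e : Q.Equivalent Q') :
    IsHyperbolic Q :=
  h.imp fun _ => e.trans

theorem isHyperbolic_sumSquares_prod_neg (r : ℕ) :
    IsHyperbolic
      ((weightedSumSquares k (1 : Fin r → k)).prod (-weightedSumSquares k (1 : Fin r → k))) :=
  ⟨r, (hyperbolicSum_equivalent r).symm⟩

theorem sumSquares_prod_equivalent (r s : ℕ) :
    ((weightedSumSquares k (1 : Fin r → k)).prod (weightedSumSquares k (1 : Fin s → k))).Equivalent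
      (weightedSumSquares k (1 : Fin (r + s) → k)) := by
  have h : (1 : Fin (r + s) → k) ∘ finSumFinEquiv = Sum.elim (1 : Fin r → k) 1 := by
    ext i; cases i <;> rfl
  exact (weightedSumSquares_sumElim_equivalent _ _).symm.trans
    (h ▸ weightedSumSquares_comp_equivalent finSumFinEquiv 1)

theorem IsHyperbolic.prod (h : IsHyperbolic Q) (h' : IsHyperbolic Q') :
    IsHyperbolic (Q.prod Q') := by
  obtain ⟨r, hr⟩ := h
  obtain ⟨s, hs⟩ := h'
  have hsum := sumSquares_prod_equivalent (k := k) r s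
  refine (isHyperbolic_sumSquares_prod_neg (r + s)).of_equivalent <|
    (hr.trans (hyperbolicSum_equivalent r)).prod (hs.trans (hyperbolicSum_equivalent s)) |>.trans <|
    (prod_neg_prod_prod_neg_equivalent _ _).trans (hsum.prod hsum.neg)

theorem IsHyperbolic.smul (h2 : (2 : k) ≠ 0) (h : IsHyperbolic Q) {c : k} (hc : c ≠ 0) :
    IsHyperbolic (c • Q) := by
  obtain ⟨r, hr⟩ := h
  refine (isHyperbolic_sumSquares_prod_neg r).of_equivalent <|
    (hr.trans (hyperbolicSum_equivalent r)).smul c |>.trans ?_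
  rw [smul_prod, smul_neg]
  exact smul_prod_neg_smul_equivalent h2 hc _

end Hyperbolic

section Pfister

variable {k : Type*} [Field k]

noncomputable def finsetFinSuccEquiv (n : ℕ) :
    Finset (Fin (n + 1)) ≃ Finset (Fin n) ⊕ Finset (Fin n) where
  toFun S := if 0 ∈ S then .inr (S.preimage Fin.succ (Fin.succ_injective n).injOn)
    else .inl (S.preimage Fin.succ (Fin.succ_injective n).injOn)
  invFun := Sum.elim (·.map (Fin.succEmb n)) (insert 0 <| ·.map (Fin.succEmb n))
  left_inv S := by
    by_cases h : 0 ∈ S <;> ext i <;> cases i using Fin.cases <;> simp [h]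
  right_inv := by
    rintro (T | T) <;> simp [Finset.ext_iff]

theorem pfisterForm_cons_equivalent {n : ℕ} (b : k) (a : Fin n → k) :
    (pfisterForm k (Fin.cons b a : Fin (n + 1) → k)).Equivalent
      ((pfisterForm k a).prod ((-b) • pfisterForm k a)) := by
  have hw : (fun S => ∏ i ∈ S, -(Fin.cons b a : Fin (n + 1) → k) i) ∘ (finsetFinSuccEquiv n).symm
      = Sum.elim (fun T => ∏ i ∈ T, -a i) ((-b) • fun T => ∏ i ∈ T, -a i) := by
    ext (T | T) <;> simp [finsetFinSuccEquiv]
  rw [pfisterForm, pfisterForm, ← weightedSumSquares_smul]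
  exact (weightedSumSquares_comp_equivalent _ _).symm.trans
    (hw ▸ weightedSumSquares_sumElim_equivalent _ _)

theorem pfisterForm_zero_equivalent (a : Fin 0 → k) :
    (pfisterForm k a).Equivalent (weightedSumSquares k (1 : Fin 1 → k)) := by
  have hw : (fun S => ∏ i ∈ S, -a i) ∘ Equiv.ofUnique (Fin 1) (Finset (Fin 0)) = 1 := by
    ext i
    simp [Finset.eq_empty_of_isEmpty]
  exact (hw ▸ weightedSumSquares_comp_equivalent _ _).symm

theorem anisotropic_sumSquares_one : (weightedSumSquares k (1 : Fin 1 → k)).Anisotropic := by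
  intro v hv
  simp only [weightedSumSquares_apply, Fin.sum_univ_one, Pi.one_apply, one_smul,
    mul_self_eq_zero] at hv
  ext i
  rwa [Fin.fin_one_eq_zero i]

theorem isRound_sumSquares_one : IsRound (weightedSumSquares k (1 : Fin 1 → k)) :=
  isRound_of_isSquare fun v => ⟨v 0, by simp [weightedSumSquares_apply]⟩

theorem isRound_pfisterForm {n : ℕ} (a : Fin n → k) (ha : ∀ i, a i ≠ 0) :
    IsRound (pfisterForm k a) := by
  induction n with
  | zero => exact isRound_sumSquares_one.of_equivalent (pfisterForm_zero_equivalent a)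
  | succ n ih =>
    rw [← Fin.cons_self_tail a]
    exact ((ih _ fun i => ha i.succ).prod_smul (neg_ne_zero.2 (ha 0))).of_equivalent
      (pfisterForm_cons_equivalent _ _)

theorem isHyperbolic_pfisterForm_prod_neg (h2 : (2 : k) ≠ 0) {n : ℕ} (a : Fin n → k)
    (ha : ∀ i, a i ≠ 0) : IsHyperbolic ((pfisterForm k a).prod (-pfisterForm k a)) := by
  induction n with
  | zero =>
    have e := pfisterForm_zero_equivalent a
    exact (isHyperbolic_sumSquares_prod_neg 1).of_equivalent (e.prod e.neg)
  | succ n ih =>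
    rw [← Fin.cons_self_tail a]
    have e := pfisterForm_cons_equivalent (a 0) (Fin.tail a)
    have hψ := ih (Fin.tail a) fun i => ha i.succ
    have hcψ := hψ.of_equivalent (smul_prod_neg_smul_equivalent h2 (neg_ne_zero.2 (ha 0))
      (pfisterForm k (Fin.tail a)))
    exact (hψ.prod hcψ).of_equivalent
      ((e.prod e.neg).trans (prod_neg_prod_prod_neg_equivalent _ _).symm)

end Pfister

/-- An `n`-fold Pfister form over a field of characteristic `≠ 2` is either
anisotropic or hyperbolic. -/
theorem stmt_11 {k : Type*} [Field k] (hchar : (2 : k) ≠ 0)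
    {n : ℕ} (a : Fin n → k) (ha : ∀ i, a i ≠ 0) :
    (pfisterForm k a).Anisotropic ∨ IsHyperbolic (pfisterForm k a) := by
  induction n with
  | zero =>
    exact Or.inl (anisotropic_sumSquares_one.of_equivalent (pfisterForm_zero_equivalent a))
  | succ n ih =>
    rw [← Fin.cons_self_tail a]
    have hb : -a 0 ≠ 0 := neg_ne_zero.2 (ha 0)
    have htail : ∀ i, Fin.tail a i ≠ 0 := fun i => ha i.succ
    have e := pfisterForm_cons_equivalent (a 0) (Fin.tail a)
    rcases ih (Fin.tail a) htail with hψ | hψ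
    · rcases (isRound_pfisterForm _ htail).anisotropic_prod_smul_or_equivalent hψ hb with h | h
      · exact Or.inl (h.of_equivalent e)
      · exact Or.inr ((isHyperbolic_pfisterForm_prod_neg hchar _ htail).of_equivalent
          (e.trans (.prod (.refl _) h)))
    · exact Or.inr ((hψ.prod (hψ.smul hchar hb)).of_equivalent e)
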